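/- Let X be a metric space, let v₀ ∈ X, let (g_n) be a sequence of bijective isometries of X such that d(v₀, g_n(v₀)) → ∞, let S ⊆ X, and suppose there is a constant C ≥ 0 such that the Gromov product (g_n⁻¹(v₀), x)_{v₀} ≤ C for every n and every x ∈ S. Then for every k ≥ 0 there exists N such that for all n ≥ N and all x ∈ S one has (g_n(v₀), g_n(x))_{v₀} ≥ k. -/
import Mathlib


open Filter Topology

/-- The Gromov product of `y` and `z` based at `x`:
`(y,z)_x = ½ (d(x,y) + d(x,z) − d(y,z))`. -/
noncomputable def gromovProd {X : Type*} [MetricSpace X] (x y z : X) : ℝ :=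
  (dist x y + dist x z - dist y z) / 2

/-- Let `X` be a metric space, `v₀ ∈ X`, and `(g n)` a sequence of bijective isometries of
`X` with `d(v₀, g n v₀) → ∞`. Let `S ⊆ X` and suppose there is `C ≥ 0` with
`(gₙ⁻¹ v₀, x)_{v₀} ≤ C` for all `n` and all `x ∈ S`. Then for every `k ≥ 0` there exists
`N` such that `(gₙ v₀, gₙ x)_{v₀} ≥ k` for all `n ≥ N` and all `x ∈ S`. -/
theorem gromov_product_escapes {X : Type*} [MetricSpace X] (v₀ : X) (g : ℕ → X ≃ᵢ X)
    (hinf : Tendsto (fun n => dist v₀ (g n v₀)) atTop atTop)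
    (S : Set X) (C : ℝ) (hC : 0 ≤ C)
    (hbound : ∀ n : ℕ, ∀ x ∈ S, gromovProd v₀ ((g n).symm v₀) x ≤ C) :
    ∀ k : ℝ, 0 ≤ k → ∃ N : ℕ, ∀ n ≥ N, ∀ x ∈ S, k ≤ gromovProd v₀ (g n v₀) (g n x) := by
  intro k hk
  obtain ⟨N, hN⟩ := (tendsto_atTop.mp hinf (k + C)).exists_forall_of_atTop
  refine ⟨N, fun n hn x hx => ?_⟩
  have key : gromovProd v₀ (g n v₀) (g n x) + gromovProd v₀ ((g n).symm v₀) x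
      = dist v₀ (g n v₀) := by
    have h1 : dist v₀ (g n x) = dist ((g n).symm v₀) x := by
      rw [← (g n).symm.dist_eq v₀ (g n x)]; simp
    have h2 : dist (g n v₀) (g n x) = dist v₀ x := (g n).dist_eq v₀ x
    have h3 : dist v₀ ((g n).symm v₀) = dist v₀ (g n v₀) := by
      rw [← (g n).dist_eq v₀ ((g n).symm v₀)]; simp [dist_comm]
    unfold gromovProd
    rw [h1, h2, h3]; ring
  have hb := hbound n x hx
  have hd : k + C ≤ dist v₀ (g n v₀) := hN n hn
  linarith
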